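/- Let g ∈ R = A[z;σ] be nonzero and left-reduced, let T_g = {k : e_k g ≠ 0} be its support, and let π_(g) := Π_{k ∈ T_g} π_k where π_k is the prime factor of x^n−1 corresponding to e_k; set κ := deg π_(g). Then the family g, xg, ..., x^{κ−1}g is a basis of the left ideal ⟨g⟩ as a left F[z]-module; equivalently, the σ-circulant M^σ(g) has rank κ and its first κ rows form a full rank generator matrix of the submodule corresponding to ⟨g⟩. -/

import Mathlib

/-!
Write `G k = e k * g` for the components of `g`. Each corner `e j * A ≅ F[x]/(π j)` is a field
and `σ` permutes the `e j`, so the leading coefficient of a nonzero `G k` lies in a single corner,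
and left-reducedness makes these corners distinct for distinct `k`. Comparing leading terms, the
decomposition `u * g = ∑ k, (u * e k) * G k` vanishes only if `u * e k = 0` for every `k` in
the support: the left annihilator of `g` consists of the polynomials whose coefficients are
multiples of `π_(g) = ∏ k ∈ T, π k`. Reducing coefficients modulo `π_(g)`, of degree `κ`, gives
the basis.
-/

open Polynomial

/-- A = F[x]/(x^n − 1). -/
abbrev Amod (F : Type) [Field F] (n : ℕ) : Type :=
  Polynomial F ⧸ (Ideal.span {Polynomial.X ^ n - 1} : Ideal (Polynomial F))

/-- the class of x in A. -/
noncomputable def xbar (F : Type) [Field F] (n : ℕ) : Amod F n :=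
  Ideal.Quotient.mk _ Polynomial.X

/-- The skew multiplication of A[z;σ]: a*z = z*σ(a). -/
noncomputable def skewMul {F A : Type*} [CommRing F] [CommRing A] [Algebra F A]
    (σ : A ≃ₐ[F] A) (g h : Polynomial A) : Polynomial A :=
  ∑ ν ∈ g.support, ∑ μ ∈ h.support,
    Polynomial.monomial (ν + μ) ((σ ^ μ) (g.coeff ν) * h.coeff μ)

/-- m is the leading monomial z^{deg f} e_j of f, with respect to the
term-over-position order on the monomials z^μ e_k. -/
def IsLM {A : Type*} [CommRing A] {r : ℕ} (e : Fin r → A) (f m : Polynomial A) : Prop :=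
  ∃ j : Fin r, m = Polynomial.monomial f.natDegree (e j) ∧
    e j * f.leadingCoeff ≠ 0 ∧ ∀ l : Fin r, j < l → e l * f.leadingCoeff = 0

/-- g is left-reduced: for k ≠ l, no nonzero term of the component e_k·g is right
divisible by the leading monomial of the component e_l·g. -/
def LeftReduced {F A : Type*} [CommRing F] [CommRing A] [Algebra F A] {r : ℕ}
    (σ : A ≃ₐ[F] A) (e : Fin r → A) (g : Polynomial A) : Prop :=
  ∀ k l : Fin r, k ≠ l →
    skewMul σ (Polynomial.C (e k)) g ≠ 0 → skewMul σ (Polynomial.C (e l)) g ≠ 0 →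
    ∀ (μ : ℕ) (j : Fin r),
      e j * (skewMul σ (Polynomial.C (e k)) g).coeff μ ≠ 0 →
      ∀ m : Polynomial A, IsLM e (skewMul σ (Polynomial.C (e l)) g) m →
        ¬ ∃ h : Polynomial A,
          Polynomial.monomial μ (e j * (skewMul σ (Polynomial.C (e k)) g).coeff μ)
            = skewMul σ h m

open Finset

section SkewMul
variable {F A : Type*} [CommRing F] [CommRing A] [Algebra F A] (σ : A ≃ₐ[F] A)

theorem coeff_skewMul (p q : A[X]) (m : ℕ) :
    (skewMul σ p q).coeff m
      = ∑ x ∈ antidiagonal m, (σ ^ x.2) (p.coeff x.1) * q.coeff x.2 := by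
  simp only [skewMul, finsetSum_coeff, coeff_monomial]
  rw [← sum_product', ← sum_filter]
  apply sum_subset
  · intro x hx
    simpa using (mem_filter.mp hx).2
  · intro x _ hx
    by_cases hp : p.coeff x.1 = 0
    · simp [hp]
    by_cases hq : q.coeff x.2 = 0
    · simp [hq]
    simp_all
  
theorem coeff_skewMul_C (a : A) (q : A[X]) (m : ℕ) :
    (skewMul σ (C a) q).coeff m = (σ ^ m) a * q.coeff m := by
  rw [coeff_skewMul, sum_eq_single (0, m)]
  · simp
  · rintro ⟨i, j⟩ hx hne
    obtain rfl | hi := eq_or_ne i 0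
    · simp_all
    · simp [coeff_C, hi]
  · simp

theorem skewMul_zero_left (q : A[X]) : skewMul σ 0 q = 0 := by
  ext m; simp [coeff_skewMul]

theorem skewMul_zero_right (p : A[X]) : skewMul σ p 0 = 0 := by
  ext m; simp [coeff_skewMul]

theorem skewMul_add_left (p p' q : A[X]) :
    skewMul σ (p + p') q = skewMul σ p q + skewMul σ p' q := by
  ext m; simp [coeff_skewMul, add_mul, sum_add_distrib]

theorem skewMul_sum_left {ι : Type*} (s : Finset ι) (p : ι → A[X]) (q : A[X]) :
    skewMul σ (∑ i ∈ s, p i) q = ∑ i ∈ s, skewMul σ (p i) q :=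
  map_sum (AddMonoidHom.mk' (skewMul σ · q) (skewMul_add_left σ · · q)) p s

theorem skewMul_mul_C (p : A[X]) (b : A) (q : A[X]) :
    skewMul σ (p * C b) q = skewMul σ p (skewMul σ (C b) q) := by
  ext m
  rw [coeff_skewMul, coeff_skewMul]
  refine sum_congr rfl fun x _ => ?_
  rw [coeff_mul_C, coeff_skewMul_C, map_mul, mul_assoc]

theorem skewMul_monomial_monomial (s t : ℕ) (a b : A) :
    skewMul σ (monomial s a) (monomial t b) = monomial (s + t) ((σ ^ t) a * b) := by
  ext m
  rw [coeff_skewMul, coeff_monomial]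
  split_ifs with h
  · rw [sum_eq_single (s, t) (fun x hx hne => ?_) (by simp [h])]
    · simp
    · rw [HasAntidiagonal.mem_antidiagonal] at hx
      rcases eq_or_ne x.1 s with h1 | h1
      · rw [coeff_monomial (n := t), if_neg (by grind), mul_zero]
      · rw [coeff_monomial, if_neg (Ne.symm h1), map_zero, zero_mul]
  · refine sum_eq_zero fun x hx => ?_
    rw [HasAntidiagonal.mem_antidiagonal] at hx
    rcases eq_or_ne x.1 s with h1 | h1
    · rw [coeff_monomial (n := t), if_neg (by grind), mul_zero]
    · rw [coeff_monomial, if_neg (Ne.symm h1), map_zero, zero_mul]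

theorem coeff_skewMul_natDegree_add (p q : A[X]) :
    (skewMul σ p q).coeff (p.natDegree + q.natDegree)
      = (σ ^ q.natDegree) p.leadingCoeff * q.leadingCoeff := by
  rw [coeff_skewMul, sum_eq_single (p.natDegree, q.natDegree)]
  · rfl
  · rintro ⟨i, j⟩ hx hne
    rw [HasAntidiagonal.mem_antidiagonal] at hx
    obtain hi | hi := lt_or_ge p.natDegree i
    · rw [coeff_eq_zero_of_natDegree_lt hi, map_zero, zero_mul]
    · rw [coeff_eq_zero_of_natDegree_lt (p := q) (by grind), mul_zero]
  · simp

theorem coeff_skewMul_of_natDegree_add_lt {p q : A[X]} {m : ℕ}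
    (h : p.natDegree + q.natDegree < m) : (skewMul σ p q).coeff m = 0 := by
  rw [coeff_skewMul]
  refine sum_eq_zero fun ⟨i, j⟩ hx => ?_
  rw [HasAntidiagonal.mem_antidiagonal] at hx
  obtain hi | hi := lt_or_ge p.natDegree i
  · rw [coeff_eq_zero_of_natDegree_lt hi, map_zero, zero_mul]
  · rw [coeff_eq_zero_of_natDegree_lt (p := q) (by omega), mul_zero]

end SkewMul

section Components
variable {F A : Type*} [CommRing F] [CommRing A] [Algebra F A] {r : ℕ} {e : Fin r → A}

-- `hdom` says that the corner `f * A` has no zero divisors.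
theorem eq_zero_or_eq_of_mul_eq_self {f : A}
    (hdom : ∀ a b, a * b * f = 0 → a * f = 0 ∨ b * f = 0) (hf : IsIdempotentElem f) {a : A}
    (ha : IsIdempotentElem a) (haf : a * f = a) :
    a = 0 ∨ a = f := by
  refine (hdom a (a - f) ?_).imp (fun h => haf ▸ h) (fun h => ?_)
  · rw [mul_sub, ha.eq, haf, sub_self, zero_mul]
  · rwa [sub_mul, haf, hf.eq, sub_eq_zero] at h

theorem CompleteOrthogonalIdempotents.exists_ringEquiv_apply_eq {ι : Type*} [Fintype ι]
    {e : ι → A} (he : CompleteOrthogonalIdempotents e)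
    (hdom : ∀ j a b, a * b * e j = 0 → a * e j = 0 ∨ b * e j = 0) (τ : A ≃+* A) (k : ι) :
    ∃ j, τ (e k) = e j := by
  by_cases hk : e k = 0
  · exact ⟨k, by rw [hk, map_zero]⟩
  obtain ⟨j, hj⟩ : ∃ j, τ (e k) * e j ≠ 0 := by
    by_contra! h
    apply hk
    rw [← map_eq_zero_iff τ τ.injective, ← mul_one (τ (e k)), ← he.complete, mul_sum]
    exact sum_eq_zero fun j _ => h j
  have hτj : τ (e k) * e j = e j :=
    (eq_zero_or_eq_of_mul_eq_self (hdom j) (he.idem j) (((he.idem k).map τ).mul (he.idem j))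
      (by rw [mul_assoc, (he.idem j).eq])).resolve_left hj
  have hτk : τ.symm (e j) = e k := by
    refine (eq_zero_or_eq_of_mul_eq_self (hdom k) (he.idem k) ((he.idem j).map τ.symm)
      ?_).resolve_left ?_
    · rw [← hτj, map_mul, RingEquiv.symm_apply_apply, mul_comm, ← mul_assoc, (he.idem k).eq]
    · rw [map_eq_zero_iff _ τ.symm.injective]
      exact fun h => hj (h ▸ hτj)
  exact ⟨j, by rw [← hτk, RingEquiv.apply_symm_apply]⟩

variable (σ : A ≃ₐ[F] A)

theorem exists_mul_leadingCoeff_skewMul_C_eq (he : CompleteOrthogonalIdempotents e)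
    (hdom : ∀ j a b, a * b * e j = 0 → a * e j = 0 ∨ b * e j = 0) (g : A[X]) (k : Fin r) :
    ∃ j, (σ ^ (skewMul σ (C (e k)) g).natDegree) (e k) = e j ∧
      e j * (skewMul σ (C (e k)) g).leadingCoeff = (skewMul σ (C (e k)) g).leadingCoeff := by
  obtain ⟨j, hj⟩ := he.exists_ringEquiv_apply_eq hdom
    (σ ^ (skewMul σ (C (e k)) g).natDegree).toRingEquiv k
  refine ⟨j, hj, ?_⟩
  rw [leadingCoeff, coeff_skewMul_C]
  simp only [AlgEquiv.coe_ringEquiv] at hj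
  rw [hj, ← mul_assoc, (he.idem j).eq]

theorem LeftReduced.eq_of_le_of_mul_leadingCoeff_eq {g : A[X]} (hred : LeftReduced σ e g)
    (he : OrthogonalIdempotents e) {k l j : Fin r}
    (hk : skewMul σ (C (e k)) g ≠ 0) (hl : skewMul σ (C (e l)) g ≠ 0)
    (hjk : e j * (skewMul σ (C (e k)) g).leadingCoeff = (skewMul σ (C (e k)) g).leadingCoeff)
    (hjl : e j * (skewMul σ (C (e l)) g).leadingCoeff = (skewMul σ (C (e l)) g).leadingCoeff)
    (hdeg : (skewMul σ (C (e l)) g).natDegree ≤ (skewMul σ (C (e k)) g).natDegree) : k = l := by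
  set Gk := skewMul σ (C (e k)) g
  set Gl := skewMul σ (C (e l)) g
  by_contra hkl
  refine hred k l hkl hk hl Gk.natDegree j ?_ (monomial Gl.natDegree (e j)) ?_
    ⟨monomial (Gk.natDegree - Gl.natDegree) ((σ ^ Gl.natDegree).symm Gk.leadingCoeff), ?_⟩
  · rw [← leadingCoeff, hjk]
    exact leadingCoeff_ne_zero.mpr hk
  · refine ⟨j, rfl, hjl.symm ▸ leadingCoeff_ne_zero.mpr hl, fun l' hl' => ?_⟩
    rw [← hjl, ← mul_assoc, he.ortho (ne_of_gt hl'), zero_mul]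
  · rw [skewMul_monomial_monomial, AlgEquiv.apply_symm_apply, Nat.sub_add_cancel hdeg,
      ← leadingCoeff, hjk, mul_comm, hjk]

theorem LeftReduced.mul_leadingCoeff_eq_zero {g : A[X]} (hred : LeftReduced σ e g)
    (he : CompleteOrthogonalIdempotents e)
    (hdom : ∀ j a b, a * b * e j = 0 → a * e j = 0 ∨ b * e j = 0) {k l j : Fin r}
    (hkl : k ≠ l) (hk : skewMul σ (C (e k)) g ≠ 0) (hl : skewMul σ (C (e l)) g ≠ 0)
    (hjk : e j * (skewMul σ (C (e k)) g).leadingCoeff = (skewMul σ (C (e k)) g).leadingCoeff) :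
    e j * (skewMul σ (C (e l)) g).leadingCoeff = 0 := by
  obtain ⟨j', -, hjl⟩ := exists_mul_leadingCoeff_skewMul_C_eq σ he hdom g l
  obtain rfl | hjj := eq_or_ne j j'
  · refine absurd ?_ hkl
    rcases le_total (skewMul σ (C (e l)) g).natDegree (skewMul σ (C (e k)) g).natDegree with h | h
    · exact hred.eq_of_le_of_mul_leadingCoeff_eq σ he.1 hk hl hjk hjl h
    · exact (hred.eq_of_le_of_mul_leadingCoeff_eq σ he.1 hl hk hjl hjk h).symm
  · rw [← hjl, ← mul_assoc, he.ortho hjj, zero_mul]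

theorem skewMul_eq_sum_skewMul_C (he : CompleteOrthogonalIdempotents e) (u g : A[X]) :
    skewMul σ u g = ∑ k, skewMul σ (u * C (e k)) (skewMul σ (C (e k)) g) := by
  conv_lhs => rw [← mul_one u, ← map_one C, ← he.complete, map_sum, mul_sum]
  rw [skewMul_sum_left]
  refine sum_congr rfl fun k _ => ?_
  rw [← skewMul_mul_C, mul_assoc, ← map_mul, (he.idem k).eq]

theorem LeftReduced.eq_zero_of_sum_skewMul_eq_zero {g : A[X]} (hred : LeftReduced σ e g)
    (he : CompleteOrthogonalIdempotents e)
    (hdom : ∀ j a b, a * b * e j = 0 → a * e j = 0 ∨ b * e j = 0)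
    (v : Fin r → A[X]) (hv : ∀ k, v k * C (e k) = v k)
    (hsum : ∑ k, skewMul σ (v k) (skewMul σ (C (e k)) g) = 0)
    (k : Fin r) (hk : skewMul σ (C (e k)) g ≠ 0) : v k = 0 := by
  classical
  set G := fun k => skewMul σ (C (e k)) g
  by_contra hvk
  set S := univ.filter fun k => G k ≠ 0 ∧ v k ≠ 0
  obtain ⟨k₀, hk₀S, hmax⟩ := S.exists_max_image (fun k => (v k).natDegree + (G k).natDegree)
    ⟨k, by simpa [S, hvk] using hk⟩
  obtain ⟨hG₀, hv₀⟩ : G k₀ ≠ 0 ∧ v k₀ ≠ 0 := by simpa [S] using hk₀S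
  obtain ⟨j, hσj, hj⟩ := exists_mul_leadingCoeff_skewMul_C_eq σ he hdom g k₀
  set N := (v k₀).natDegree + (G k₀).natDegree
  -- only the term of `k₀` survives in the `e j`-component of the coefficient of `z ^ N`
  have hother : ∀ k ≠ k₀, e j * (skewMul σ (v k) (G k)).coeff N = 0 := by
    intro k hkk₀
    by_cases hGk : G k = 0
    · rw [hGk, skewMul_zero_right, coeff_zero, mul_zero]
    by_cases hvk : v k = 0
    · rw [hvk, skewMul_zero_left, coeff_zero, mul_zero]
    rcases (hmax k (by simp [S, hGk, hvk])).lt_or_eq with hlt | heq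
    · rw [coeff_skewMul_of_natDegree_add_lt σ hlt, mul_zero]
    · rw [← heq, coeff_skewMul_natDegree_add, mul_left_comm,
        hred.mul_leadingCoeff_eq_zero σ he hdom (Ne.symm hkk₀) hG₀ hGk hj, mul_zero]
  have htop : e j * (skewMul σ (v k₀) (G k₀)).coeff N = 0 := by
    have h := congr_arg (fun p => e j * p.coeff N) hsum
    simp only [finsetSum_coeff, mul_sum, coeff_zero, mul_zero] at h
    rwa [sum_eq_single k₀ (fun k _ hk => hother k hk) (by simp)] at h
  rw [coeff_skewMul_natDegree_add, ← mul_assoc, mul_comm (e j)] at htop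
  have hvj : (σ ^ (G k₀).natDegree) (v k₀).leadingCoeff * e j
      = (σ ^ (G k₀).natDegree) (v k₀).leadingCoeff := by
    rw [← hσj, ← map_mul, leadingCoeff, ← coeff_mul_C, hv]
  rcases hdom j _ _ (by rw [mul_right_comm, htop]) with h | h
  · rw [hvj, map_eq_zero_iff _ (AlgEquiv.injective _), leadingCoeff_eq_zero] at h
    exact hv₀ h
  · rw [mul_comm, hj, leadingCoeff_eq_zero] at h
    exact hG₀ h

theorem LeftReduced.skewMul_eq_zero_iff {g : A[X]} (hred : LeftReduced σ e g)
    (he : CompleteOrthogonalIdempotents e)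
    (hdom : ∀ j a b, a * b * e j = 0 → a * e j = 0 ∨ b * e j = 0) (u : A[X]) :
    skewMul σ u g = 0 ↔ ∀ ν k, skewMul σ (C (e k)) g ≠ 0 → u.coeff ν * e k = 0 := by
  rw [skewMul_eq_sum_skewMul_C σ he]
  constructor
  · intro h ν k hk
    rw [← coeff_mul_C, hred.eq_zero_of_sum_skewMul_eq_zero σ he hdom _
      (fun k => by rw [mul_assoc, ← map_mul, (he.idem k).eq]) h k hk, coeff_zero]
  · intro h
    refine sum_eq_zero fun k _ => ?_
    by_cases hk : skewMul σ (C (e k)) g = 0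
    · rw [hk, skewMul_zero_right]
    · have : u * C (e k) = 0 := ext fun ν => by rw [coeff_mul_C, h ν k hk, coeff_zero]
      rw [this, skewMul_zero_left]

end Components

section Factors
variable {F A : Type*} [Field F] [CommRing A] [Algebra F A] {x : A}

theorem aeval_mul_eq_zero_iff_dvd {p : F[X]} {f : A} (hp : Irreducible p)
    (hpf : aeval x p * f = 0) (hf : f ≠ 0) (P : F[X]) : aeval x P * f = 0 ↔ p ∣ P := by
  refine ⟨fun h => ?_, fun ⟨s, hs⟩ => by rw [hs, map_mul, mul_right_comm, hpf, zero_mul]⟩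
  by_contra hpP
  obtain ⟨a, b, hab⟩ := (hp.coprime_iff_not_dvd).mpr hpP
  apply hf
  have := congr_arg (fun P => aeval x P * f) hab
  simp only [map_add, map_mul, map_one, add_mul, one_mul, mul_assoc, hpf, h, mul_zero,
    add_zero] at this
  exact this.symm

theorem mul_mul_eq_zero_iff_of_irreducible (hx : Function.Surjective (aeval x : F[X] →ₐ[F] A))
    {p : F[X]} {f : A} (hp : Irreducible p) (hpf : aeval x p * f = 0) (hf : f ≠ 0) (a b : A) :
    a * b * f = 0 ↔ a * f = 0 ∨ b * f = 0 := by
  refine ⟨fun h => ?_, ?_⟩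
  · obtain ⟨P, rfl⟩ := hx a
    obtain ⟨Q, rfl⟩ := hx b
    simp only [aeval_mul_eq_zero_iff_dvd hp hpf hf, ← map_mul] at h ⊢
    exact hp.prime.dvd_or_dvd h
  · rintro (h | h)
    · rw [mul_right_comm, h, zero_mul]
    · rw [mul_assoc, h, mul_zero]

theorem Polynomial.Monic.isCoprime_of_irreducible {p q : F[X]} (hpm : p.Monic) (hqm : q.Monic)
    (hp : Irreducible p) (hq : Irreducible q) (hpq : p ≠ q) : IsCoprime p q :=
  hp.coprime_iff_not_dvd.mpr fun h =>
    hpq (eq_of_monic_of_associated hpm hqm (hp.associated_of_dvd hq h))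

theorem comap_aeval_iInf_ker_mulRight {ι : Type*} {π : ι → F[X]} {e : ι → A}
    (hirr : ∀ k, Irreducible (π k)) (hmonic : ∀ k, (π k).Monic) (hinj : Function.Injective π)
    (hπe : ∀ k, aeval x (π k) * e k = 0) (hne : ∀ k, e k ≠ 0) (T : Finset ι) :
    Ideal.comap (aeval x) (⨅ k ∈ T, LinearMap.ker (LinearMap.mulRight A (e k)))
      = Ideal.span {∏ k ∈ T, π k} := by
  ext P
  simp only [Ideal.mem_comap, Submodule.mem_iInf, LinearMap.mem_ker, LinearMap.mulRight_apply,
    Ideal.mem_span_singleton, aeval_mul_eq_zero_iff_dvd (hirr _) (hπe _) (hne _)]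
  refine ⟨Finset.prod_dvd_of_coprime fun k _ l _ hkl => ?_,
    fun h k hk => (Finset.dvd_prod_of_mem π hk).trans h⟩
  exact (hmonic k).isCoprime_of_irreducible (hmonic l) (hirr k) (hirr l) (hinj.ne hkl)

end Factors

section Basis
variable {F A : Type*} [Field F] [CommRing A] [Algebra F A] (σ : A ≃ₐ[F] A) (x : A)

theorem sum_skewMul_map_skewMul_C_pow {κ : ℕ} (c : Fin κ → F[X]) (g : A[X]) :
    ∑ i : Fin κ, skewMul σ ((c i).map (algebraMap F A)) (skewMul σ (C (x ^ (i : ℕ))) g)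
      = skewMul σ (∑ i : Fin κ, (c i).map (algebraMap F A) * C (x ^ (i : ℕ))) g := by
  rw [skewMul_sum_left]
  exact sum_congr rfl fun i _ => (skewMul_mul_C σ _ _ g).symm

theorem coeff_sum_map_mul_C_pow {κ : ℕ} (c : Fin κ → F[X]) (ν : ℕ) :
    (∑ i : Fin κ, (c i).map (algebraMap F A) * C (x ^ (i : ℕ))).coeff ν
      = aeval x ((degreeLTEquiv F κ).symm fun i => (c i).coeff ν : F[X]) := by
  change _ = aeval x (∑ i : Fin κ, monomial i ((c i).coeff ν))
  simp only [finsetSum_coeff, coeff_mul_C, coeff_map, map_sum, aeval_monomial]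

theorem aeval_eq_sum_fin {κ : ℕ} {R : F[X]} (hR : R.degree < κ) :
    aeval x R = ∑ i : Fin κ, algebraMap F A (R.coeff i) * x ^ (i : ℕ) := by
  rw [aeval_def, eval₂_eq_sum]
  exact (sum_fin _ (by simp) hR).symm

variable {σ x} {g : A[X]} {I : Ideal A} {q : F[X]}

theorem eq_zero_of_sum_skewMul_map_skewMul_C_pow_eq_zero
    (hann : ∀ u : A[X], skewMul σ u g = 0 ↔ ∀ ν, u.coeff ν ∈ I)
    (hI : I.comap (aeval x) = Ideal.span {q}) (c : Fin q.natDegree → F[X])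
    (hc : ∑ i : Fin q.natDegree,
      skewMul σ ((c i).map (algebraMap F A)) (skewMul σ (C (x ^ (i : ℕ))) g) = 0) (i) :
    c i = 0 := by
  rw [sum_skewMul_map_skewMul_C_pow, hann] at hc
  ext ν
  set P := (degreeLTEquiv F q.natDegree).symm fun i => (c i).coeff ν
  have hqP : q ∣ (P : F[X]) := by
    rw [← Ideal.mem_span_singleton, ← hI, Ideal.mem_comap, ← coeff_sum_map_mul_C_pow]
    exact hc ν
  have hP : (P : F[X]) = 0 := by
    by_contra hP
    have := natDegree_le_of_dvd hqP hP
    have := (natDegree_lt_iff_degree_lt hP).mpr (mem_degreeLT.mp P.2)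
    omega
  simpa [P] using congr_fun (congr_arg (degreeLTEquiv F q.natDegree) (Subtype.ext hP : P = 0)) i

theorem exists_skewMul_eq_sum_skewMul_map_skewMul_C_pow
    (hx : Function.Surjective (aeval x : F[X] →ₐ[F] A)) (hq : q.Monic)
    (hann : ∀ u : A[X], skewMul σ u g = 0 ↔ ∀ ν, u.coeff ν ∈ I)
    (hI : I.comap (aeval x) = Ideal.span {q}) (u : A[X]) :
    ∃ c : Fin q.natDegree → F[X], skewMul σ u g = ∑ i : Fin q.natDegree,
      skewMul σ ((c i).map (algebraMap F A)) (skewMul σ (C (x ^ (i : ℕ))) g) := by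
  induction u using Polynomial.induction_on' with
  | add p p' hp hp' =>
    obtain ⟨c, hc⟩ := hp
    obtain ⟨c', hc'⟩ := hp'
    refine ⟨c + c', ?_⟩
    simp only [skewMul_add_left, hc, hc', Pi.add_apply, Polynomial.map_add, sum_add_distrib]
  | monomial ν a =>
    obtain ⟨L, rfl⟩ := hx a
    refine ⟨fun i => monomial ν ((L %ₘ q).coeff i), ?_⟩
    have hmod : monomial ν (aeval x L) = monomial ν (aeval x (L %ₘ q))
        + monomial ν (aeval x (q * (L /ₘ q))) := by
      rw [← map_add, ← map_add, modByMonic_add_div L q]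
    have hzero : skewMul σ (monomial ν (aeval x (q * (L /ₘ q)))) g = 0 := by
      rw [hann]
      intro μ
      rw [coeff_monomial]
      split_ifs
      · rw [← Ideal.mem_comap, hI, Ideal.mem_span_singleton]
        exact dvd_mul_right _ _
      · exact I.zero_mem
    rw [hmod, skewMul_add_left, hzero, add_zero, sum_skewMul_map_skewMul_C_pow,
      aeval_eq_sum_fin x (degree_modByMonic_lt L hq |>.trans_eq (degree_eq_natDegree hq.ne_zero)),
      map_sum]
    congr 1
    refine sum_congr rfl fun i _ => ?_
    rw [Polynomial.map_monomial, monomial_mul_C]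

theorem exists_eq_skewMul_iff_exists_eq_sum
    (hx : Function.Surjective (aeval x : F[X] →ₐ[F] A)) (hq : q.Monic)
    (hann : ∀ u : A[X], skewMul σ u g = 0 ↔ ∀ ν, u.coeff ν ∈ I)
    (hI : I.comap (aeval x) = Ideal.span {q}) (f : A[X]) :
    (∃ u, f = skewMul σ u g) ↔ ∃ c : Fin q.natDegree → F[X], f = ∑ i : Fin q.natDegree,
      skewMul σ ((c i).map (algebraMap F A)) (skewMul σ (C (x ^ (i : ℕ))) g) := by
  constructor
  · rintro ⟨u, rfl⟩
    exact exists_skewMul_eq_sum_skewMul_map_skewMul_C_pow hx hq hann hI u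
  · rintro ⟨c, rfl⟩
    exact ⟨_, sum_skewMul_map_skewMul_C_pow σ x c g⟩

end Basis

theorem aeval_xbar (F : Type) [Field F] (n : ℕ) (P : F[X]) :
    aeval (xbar F n) P = Ideal.Quotient.mk _ P :=
  AdjoinRoot.aeval_eq P

theorem stmt_19_general (F : Type) [Field F] (n : ℕ)
    (r : ℕ) (π : Fin r → Polynomial F)
    (hirr : ∀ k, Irreducible (π k)) (hmonic : ∀ k, (π k).Monic)
    (hdist : Function.Injective π)
    (e : Fin r → Amod F n)
    (hidem : ∀ k, e k * e k = e k) (hne : ∀ k, e k ≠ 0)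
    (horth : ∀ k l, k ≠ l → e k * e l = 0)
    (hsum : ∑ k : Fin r, e k = 1)
    (hπe : ∀ k, Ideal.Quotient.mk (Ideal.span {Polynomial.X ^ n - 1} : Ideal (Polynomial F))
        (π k) * e k = 0)
    (σ : Amod F n ≃ₐ[F] Amod F n)
    (g : Polynomial (Amod F n)) (hred : LeftReduced σ e g)
    (T : Finset (Fin r)) (hT : ∀ k, k ∈ T ↔ skewMul σ (Polynomial.C (e k)) g ≠ 0)
    (κ : ℕ) (hκ : κ = (∏ k ∈ T, π k).natDegree) :
    (∀ c : Fin κ → Polynomial F,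
        (∑ i : Fin κ, skewMul σ ((c i).map (algebraMap F (Amod F n)))
            (skewMul σ (Polynomial.C (xbar F n ^ (i : ℕ))) g)) = 0 →
        ∀ i, c i = 0) ∧
    (∀ f : Polynomial (Amod F n),
        (∃ u, f = skewMul σ u g) ↔
        ∃ c : Fin κ → Polynomial F,
          f = ∑ i : Fin κ, skewMul σ ((c i).map (algebraMap F (Amod F n)))
            (skewMul σ (Polynomial.C (xbar F n ^ (i : ℕ))) g)) := by
  have hx : Function.Surjective (aeval (xbar F n) : F[X] →ₐ[F] Amod F n) := by
    intro a
    obtain ⟨P, rfl⟩ := Ideal.Quotient.mk_surjective a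
    exact ⟨P, aeval_xbar F n P⟩
  have hπe' : ∀ k, aeval (xbar F n) (π k) * e k = 0 := by simpa only [aeval_xbar] using hπe
  have he : CompleteOrthogonalIdempotents e := ⟨⟨hidem, horth⟩, hsum⟩
  have hann : ∀ u, skewMul σ u g = 0 ↔
      ∀ ν, u.coeff ν ∈ ⨅ k ∈ T, LinearMap.ker (LinearMap.mulRight (Amod F n) (e k)) := by
    intro u
    rw [hred.skewMul_eq_zero_iff σ he fun j a b =>
      (mul_mul_eq_zero_iff_of_irreducible hx (hirr j) (hπe' j) (hne j) a b).mp]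
    simp only [Submodule.mem_iInf, LinearMap.mem_ker, LinearMap.mulRight_apply, hT]
  have hI := comap_aeval_iInf_ker_mulRight hirr hmonic hdist hπe' hne T
  subst hκ
  exact ⟨eq_zero_of_sum_skewMul_map_skewMul_C_pow_eq_zero hann hI,
    exists_eq_skewMul_iff_exists_eq_sum hx (monic_prod_of_monic _ _ fun k _ => hmonic k) hann hI⟩

/-- for a nonzero left-reduced g ∈ R = A[z;σ] with support T and
κ = deg Π_{k ∈ T} π_k, the family g, xg, ..., x^{κ−1}g is a left F[z]-basis of the left
ideal ⟨g⟩: it is F[z]-linearly independent and F[z]-spans ⟨g⟩. -/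
theorem stmt_19 (F : Type) [Field F] [Fintype F] (n : ℕ) (hn : 0 < n)
    (hchar : ¬ (ringChar F ∣ n))
    (r : ℕ) (π : Fin r → Polynomial F)
    (hfact : (Polynomial.X ^ n - 1 : Polynomial F) = ∏ k : Fin r, π k)
    (hirr : ∀ k, Irreducible (π k)) (hmonic : ∀ k, (π k).Monic)
    (hdist : Function.Injective π)
    (e : Fin r → Amod F n)
    (hidem : ∀ k, e k * e k = e k) (hne : ∀ k, e k ≠ 0)
    (horth : ∀ k l, k ≠ l → e k * e l = 0)
    (hsum : ∑ k : Fin r, e k = 1)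
    (hπe : ∀ k, Ideal.Quotient.mk (Ideal.span {Polynomial.X ^ n - 1} : Ideal (Polynomial F))
        (π k) * e k = 0)
    (σ : Amod F n ≃ₐ[F] Amod F n)
    (g : Polynomial (Amod F n)) (hg : g ≠ 0) (hred : LeftReduced σ e g)
    (T : Finset (Fin r)) (hT : ∀ k, k ∈ T ↔ skewMul σ (Polynomial.C (e k)) g ≠ 0)
    (κ : ℕ) (hκ : κ = (∏ k ∈ T, π k).natDegree) :
    (∀ c : Fin κ → Polynomial F,
        (∑ i : Fin κ, skewMul σ ((c i).map (algebraMap F (Amod F n)))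
            (skewMul σ (Polynomial.C (xbar F n ^ (i : ℕ))) g)) = 0 →
        ∀ i, c i = 0) ∧
    (∀ f : Polynomial (Amod F n),
        (∃ u, f = skewMul σ u g) ↔
        ∃ c : Fin κ → Polynomial F,
          f = ∑ i : Fin κ, skewMul σ ((c i).map (algebraMap F (Amod F n)))
            (skewMul σ (Polynomial.C (xbar F n ^ (i : ℕ))) g)) :=
  stmt_19_general F n r π hirr hmonic hdist e hidem hne horth hsum hπe σ g hred T hT κ hκ
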